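/- arXiv:1801.03901 — 2 statements merged into one kernel-verified Lean document; each statement's English description precedes it below -/
import Mathlib

section
/- The derivative of the joint sampling probability in the bivariate liability threshold model at zero correlation equals B'(0) = φ(t_i)φ(t_j)σ²(s¹ − s⁰)², where φ is the standard normal density. -/
/-- The standard normal density `φ`. -/
noncomputable def stdNormalPDF (t : ℝ) : ℝ :=
  (Real.sqrt (2 * Real.pi))⁻¹ * Real.exp (-(t ^ 2) / 2)

/-- In the bivariate liability threshold model, with
`A_{ab}'(0) = φ(t_i)φ(t_j)σ²(−1)^{1{a≠b}}` and
`B(ρ) = (s¹)²A₁₁(ρ) + s¹s⁰(A₁₀(ρ)+A₀₁(ρ)) + (s⁰)²A₀₀(ρ)`,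
the derivative of the joint sampling probability at zero correlation equals
`B'(0) = φ(t_i)φ(t_j)σ²(s¹ − s⁰)²`. -/
theorem deriv_joint_sampling_probability (ti tj σ s0 s1 : ℝ)
    (A11 A10 A01 A00 : ℝ → ℝ)
    (h11 : HasDerivAt A11 (stdNormalPDF ti * stdNormalPDF tj * σ ^ 2) 0)
    (h10 : HasDerivAt A10 (-(stdNormalPDF ti * stdNormalPDF tj * σ ^ 2)) 0)
    (h01 : HasDerivAt A01 (-(stdNormalPDF ti * stdNormalPDF tj * σ ^ 2)) 0)
    (h00 : HasDerivAt A00 (stdNormalPDF ti * stdNormalPDF tj * σ ^ 2) 0) :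
    HasDerivAt (fun ρ => s1 ^ 2 * A11 ρ + s1 * s0 * (A10 ρ + A01 ρ) + s0 ^ 2 * A00 ρ)
      (stdNormalPDF ti * stdNormalPDF tj * σ ^ 2 * (s1 - s0) ^ 2) 0 := by
  have := (((h11.const_mul (s1^2)).add ((h10.add h01).const_mul (s1*s0))).add
    (h00.const_mul (s0^2)))
  refine this.congr_deriv ?_
  ring
end

section
/- Under exact versions of Assumptions 1 and 2 applied with unit i removed, the normalized cavity distribution satisfies q_{−i}(g_i) = P(g_i | X, Z, y_{−i}), i.e., the cavity distribution equals the conditional law of g_i given the other responses. -/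
open MeasureTheory

/-- Under exact versions of Assumptions 1 and 2 applied with unit `i`
removed, the normalized cavity distribution satisfies
`q_{−i}(g_i) = P(g_i | X, Z, y_{−i})`.

The latent vector is modeled as a pair `(g_i, g_{−i}) ∈ ℝ × ℝ^m` with joint density
`Pg`.  For `j ≠ i` (indexed by `Fin m`):
* `w j u = P(y_j | g_j = u, X_j)`, `sbar j = P(s_j = 1 | y_j)` (a constant given the
  observed `y_j`), so that `f j u = P(y_j, s_j = 1 | g_j = u, X_j) = w j u · sbar j`;
* `h j u = P(s_j = 1 | g_j = u, X_j)` and `c j = P(s_j = 1 | X, Z, s_{−j} = 1) > 0`;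
* Assumption 1 (exact, omitting `i`):
  `P(s_{−i} = 1 | X, Z) = ∫ Pg(p) ∏ j, h j (p.2 j) dp = C⁻¹ ∏ j, c j`;
* Assumption 2 (exact, omitting `i`, after integrating out `g_{−i}`):
  `q*_{−i}(x) = ∫ Pg(x,u) ∏ j, t j (u j) du = ∫ Pg(x,u) ∏ j, (f j (u j) / c j) du`.

The conclusion identifies `q_{−i} = q*_{−i} / ∫ q*_{−i}` with the conditional density
of `g_i` given `y_{−i}` (whose value at `x` is
`(∫ Pg(x,u) ∏ j, w j (u j) du) / P(y_{−i} | X, Z)`). -/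
theorem aep_cavity_is_conditional
    {m : ℕ} (Pg : ℝ × (Fin m → ℝ) → ℝ)
    (t f w h : Fin m → ℝ → ℝ)
    (sbar c : Fin m → ℝ) (C : ℝ)
    (hPg0 : ∀ p, 0 ≤ Pg p)
    (hc : ∀ j, 0 < c j) (hsbar : ∀ j, 0 < sbar j)
    (hfw : ∀ j u, f j u = w j u * sbar j)
    (hA1 : (∫ p : ℝ × (Fin m → ℝ), Pg p * ∏ j, h j (p.2 j)) = C⁻¹ * ∏ j, c j)
    (qstar : ℝ → ℝ)
    (hqstar : ∀ x, qstar x = ∫ u : Fin m → ℝ, Pg (x, u) * ∏ j, t j (u j))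
    (hA2 : ∀ x, (∫ u : Fin m → ℝ, Pg (x, u) * ∏ j, t j (u j)) =
      ∫ u : Fin m → ℝ, Pg (x, u) * ∏ j, f j (u j) / c j)
    (hintw : Integrable (fun p : ℝ × (Fin m → ℝ) => Pg p * ∏ j, w j (p.2 j)))
    (hnorm : (∫ x, qstar x) ≠ 0)
    (hy : (∫ p : ℝ × (Fin m → ℝ), Pg p * ∏ j, w j (p.2 j)) ≠ 0) :
    ∀ x : ℝ, qstar x / (∫ x', qstar x') =
      (∫ u : Fin m → ℝ, Pg (x, u) * ∏ j, w j (u j)) /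
        ∫ p : ℝ × (Fin m → ℝ), Pg p * ∏ j, w j (p.2 j) := by
  set k : ℝ := ∏ j, sbar j / c j with hkdef
  have hk : k ≠ 0 := by
    refine ne_of_gt (Finset.prod_pos fun j _ => div_pos (hsbar j) (hc j))
  have hq : ∀ x, qstar x = (∫ u : Fin m → ℝ, Pg (x, u) * ∏ j, w j (u j)) * k := by
    intro x
    rw [hqstar, hA2]
    have : ∀ u : Fin m → ℝ, Pg (x, u) * ∏ j, f j (u j) / c j
        = (Pg (x, u) * ∏ j, w j (u j)) * k := by
      intro u
      simp only [hfw, hkdef]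
      rw [mul_assoc, ← Finset.prod_mul_distrib]
      congr 1
      refine Finset.prod_congr rfl fun j _ => by ring
    simp_rw [this]
    rw [integral_mul_const]
  have hFub : (∫ p : ℝ × (Fin m → ℝ), Pg p * ∏ j, w j (p.2 j))
      = ∫ x : ℝ, ∫ u : Fin m → ℝ, Pg (x, u) * ∏ j, w j (u j) := by
    rw [MeasureTheory.Measure.volume_eq_prod] at hintw ⊢
    exact MeasureTheory.integral_prod _ hintw
  have hint2 : (∫ x, qstar x)
      = (∫ p : ℝ × (Fin m → ℝ), Pg p * ∏ j, w j (p.2 j)) * k := by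
    simp_rw [hq]
    rw [integral_mul_const, hFub]
  intro x
  rw [hq x, hint2, mul_div_mul_right _ _ hk]
end
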